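/- arXiv:1907.00407 — 8 statements merged into one kernel-verified Lean document; each statement's English description precedes it below -/
import Mathlib

section
/- Let P be a finite poset and ω ∈ ℝ₊^P a weight vector. If the support of ω (the set of elements where ω is nonzero) is an antichain of P, then any maximal chain π' that is longest under ω must intersect both the set of minimal elements of the upper set U(supp(ω)) and the set of maximal elements of the lower set L(supp(ω)). -/
variable {P : Type*} [Fintype P] [PartialOrder P]

/-- The length of the path `π` (a set of vertices) under the weight vector `ω`. -/
noncomputable def pathLen (ω : P → ℝ) (π : Set P) : ℝ := ∑ v, π.indicator ω v

/-- The lower set of `A`. -/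
def lowSet (A : Set P) : Set P := {u | ∃ v ∈ A, u ≤ v}

/-- The upper set of `A`. -/
def upSet (A : Set P) : Set P := {u | ∃ v ∈ A, v ≤ u}

/-- `∂L(A)`: the maximal elements of the lower set of `A`. -/
def bdryL (A : Set P) : Set P := {u | u ∈ lowSet A ∧ ∀ w ∈ lowSet A, u ≤ w → u = w}

/-- `∂U(A)`: the minimal elements of the upper set of `A`. -/
def bdryU (A : Set P) : Set P := {u | u ∈ upSet A ∧ ∀ w ∈ upSet A, w ≤ u → u = w}

/-- If the support of a nonnegative weight vector `ω` is a (nonempty) antichain, then any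
maximal chain that is longest under `ω` meets both `∂U(supp ω)` and `∂L(supp ω)`. -/
theorem longest_chain_meets_boundaries (ω : P → ℝ) (hω : ∀ v, 0 ≤ ω v)
    (hsupp : IsAntichain (· ≤ ·) (Function.support ω))
    (hne : (Function.support ω).Nonempty)
    (π' : Set P) (hπ' : IsMaxChain (· ≤ ·) π')
    (hmax : ∀ π'' : Set P, IsMaxChain (· ≤ ·) π'' → pathLen ω π'' ≤ pathLen ω π') :
    (π' ∩ bdryU (Function.support ω)).Nonempty ∧
      (π' ∩ bdryL (Function.support ω)).Nonempty := by
  obtain ⟨v₀, hv₀⟩ := hne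
  have hchain : IsChain (· ≤ ·) ({v₀} : Set P) :=
    Set.subsingleton_singleton.isChain
  obtain ⟨π'', hπ'', hsub⟩ := hchain.exists_maxChain
  have hpos : 0 < pathLen ω π'' := by
    have h1 : ω v₀ ≤ pathLen ω π'' := by
      unfold pathLen
      have hmem : π''.indicator ω v₀ = ω v₀ := Set.indicator_of_mem (hsub rfl) ω
      calc ω v₀ = π''.indicator ω v₀ := hmem.symm
        _ ≤ ∑ v, π''.indicator ω v :=
          Finset.single_le_sum (fun i _ => Set.indicator_nonneg (fun j _ => hω j) i)
            (Finset.mem_univ v₀)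
    exact lt_of_lt_of_le (lt_of_le_of_ne (hω v₀) (Ne.symm hv₀)) h1
  have hpos' : 0 < pathLen ω π' := lt_of_lt_of_le hpos (hmax π'' hπ'')
  by_cases hcap : ∃ v ∈ π', ω v ≠ 0
  · obtain ⟨v, hvπ, hv⟩ := hcap
    have hUv : v ∈ bdryU (Function.support ω) := by
      refine ⟨⟨v, hv, le_refl v⟩, ?_⟩
      rintro w ⟨s, hs, hsw⟩ hwv
      have hsv : s = v := by
        by_contra hne'
        exact hsupp hs hv hne' (hsw.trans hwv)
      subst hsv
      exact (le_antisymm hwv hsw).symm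
    have hLv : v ∈ bdryL (Function.support ω) := by
      refine ⟨⟨v, hv, le_refl v⟩, ?_⟩
      rintro w ⟨s, hs, hws⟩ hvw
      have hsv : v = s := by
        by_contra hne'
        exact hsupp hv hs hne' (hvw.trans hws)
      subst hsv
      exact le_antisymm hvw hws
    exact ⟨⟨v, hvπ, hUv⟩, ⟨v, hvπ, hLv⟩⟩
  · exfalso
    push_neg at hcap
    have : pathLen ω π' = 0 := by
      unfold pathLen
      apply Finset.sum_eq_zero
      intro v _
      by_cases hvπ : v ∈ π'
      · rw [Set.indicator_of_mem hvπ]; exact hcap v hvπ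
      · exact Set.indicator_of_notMem hvπ ω
    rw [this] at hpos'
    exact lt_irrefl 0 hpos'
end

section
/- Let P be a finite poset and π, π' two distinct maximal chains of P. If the disorder graph Δ(π, π') is connected, then π \ π' is a saturated subset of P: whenever u, w ∈ π \ π', v ∈ π, and u < v < w, it follows that v ∈ π \ π'. -/
variable {P : Type*} [Fintype P] [PartialOrder P]

/-- The disorder graph `Δ(π, π')`: vertices are the elements of the symmetric difference of
`π` and `π'`, with an edge between incomparable elements. -/
def disorderGraph (π π' : Set P) : SimpleGraph ((π \ π') ∪ (π' \ π) : Set P) where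
  Adj u v := ¬(u : P) ≤ (v : P) ∧ ¬(v : P) ≤ (u : P)
  symm := ⟨fun u v h => ⟨h.2, h.1⟩⟩
  loopless := ⟨fun u h => h.1 le_rfl⟩

/-!
If the middle element `v` also lay in `π'`, it would be comparable with every element of `π ∪ π'`,
hence strictly below or strictly above every vertex of `Δ(π, π')`. Edges join incomparable
elements, so no edge leads from below `v` to above `v`, and the path from `u < v` to `w > v`
provided by connectivity cannot exist.
-/

theorem SimpleGraph.Reachable.mem_of_forall_adj_mem {V : Type*} {G : SimpleGraph V} {S : Set V}
    (hS : ∀ ⦃a b⦄, G.Adj a b → a ∈ S → b ∈ S) {a b : V} (hab : G.Reachable a b) (ha : a ∈ S) :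
    b ∈ S := by
  obtain ⟨p⟩ := hab
  induction p with
  | nil => exact ha
  | cons hadj _ ih => exact ih (hS hadj ha)

theorem IsChain.lt_or_gt_of_mem_inter_of_mem_symmDiff {α : Type*} [PartialOrder α]
    {s t : Set α} (hs : IsChain (· ≤ ·) s) (ht : IsChain (· ≤ ·) t) {v x : α}
    (hvs : v ∈ s) (hvt : v ∈ t) (hx : x ∈ (s \ t) ∪ (t \ s)) : x < v ∨ v < x := by
  rcases hx with ⟨hxs, hxt⟩ | ⟨hxt, hxs⟩
  · have hxv : x ≠ v := by rintro rfl; exact hxt hvt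
    exact (hs.total hxs hvs).imp hxv.lt_of_le hxv.symm.lt_of_le
  · have hxv : x ≠ v := by rintro rfl; exact hxs hvs
    exact (ht.total hxt hvt).imp hxv.lt_of_le hxv.symm.lt_of_le

theorem disorderGraph_reachable_lt_of_lt {Q : Type*} [PartialOrder Q] {π π' : Set Q}
    (hπ : IsChain (· ≤ ·) π) (hπ' : IsChain (· ≤ ·) π') {v : Q} (hv : v ∈ π) (hv' : v ∈ π')
    {a b : ((π \ π') ∪ (π' \ π) : Set Q)} (hab : (disorderGraph π π').Reachable a b)
    (ha : (a : Q) < v) : (b : Q) < v :=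
  hab.mem_of_forall_adj_mem (G := disorderGraph π π') (S := {x | (x : Q) < v})
    (fun x y hxy (hx : (x : Q) < v) =>
      (hπ.lt_or_gt_of_mem_inter_of_mem_symmDiff hπ' hv hv' y.2).resolve_right
        fun hy => hxy.1 (hx.trans hy).le) ha

theorem saturated_of_disorder_connected_general (π π' : Set P)
    (hπ : IsMaxChain (· ≤ ·) π) (hπ' : IsMaxChain (· ≤ ·) π')
    (hconn : (disorderGraph π π').Connected)
    (u w : P) (hu : u ∈ π \ π') (hw : w ∈ π \ π')
    (v : P) (hv : v ∈ π) (huv : u < v) (hvw : v < w) :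
    v ∈ π \ π' := by
  refine ⟨hv, fun hv' => ?_⟩
  exact lt_asymm hvw <|
    disorderGraph_reachable_lt_of_lt hπ.1 hπ'.1 hv hv' (hconn ⟨u, Or.inl hu⟩ ⟨w, Or.inl hw⟩) huv

/-- If the disorder graph of two distinct maximal chains is connected, then `π \ π'` is
saturated: any element of `π` strictly between two elements of `π \ π'` lies in `π \ π'`. -/
theorem saturated_of_disorder_connected (π π' : Set P)
    (hπ : IsMaxChain (· ≤ ·) π) (hπ' : IsMaxChain (· ≤ ·) π') (hne : π ≠ π')
    (hconn : (disorderGraph π π').Connected)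
    (u w : P) (hu : u ∈ π \ π') (hw : w ∈ π \ π')
    (v : P) (hv : v ∈ π) (huv : u < v) (hvw : v < w) :
    v ∈ π \ π' :=
  saturated_of_disorder_connected_general π π' hπ hπ' hconn u w hu hw v hv huv hvw
end

section
/- Let P be a finite poset, π a maximal chain of P, and v ∈ P \ π. Then the set N_v of elements of π that are incomparable with v is nonempty, and it is saturated in π: if u₀ = min N_v and u₁ = max N_v, then every u ∈ π with u₀ ≤ u ≤ u₁ is incomparable with v. -/
variable {P : Type*} [Fintype P] [PartialOrder P]

/-- For `v` off a maximal chain `π`, the set `N_v` of elements of `π` incomparable with `v` is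
nonempty and saturated in `π`: any element of `π` between two elements of `N_v` is in `N_v`. -/
theorem incomparable_set_nonempty_saturated (π : Set P) (hπ : IsMaxChain (· ≤ ·) π)
    (v : P) (hv : v ∉ π) :
    {u ∈ π | ¬u ≤ v ∧ ¬v ≤ u}.Nonempty ∧
      ∀ u₀ ∈ {u ∈ π | ¬u ≤ v ∧ ¬v ≤ u}, ∀ u₁ ∈ {u ∈ π | ¬u ≤ v ∧ ¬v ≤ u},
        ∀ u ∈ π, u₀ ≤ u → u ≤ u₁ → ¬u ≤ v ∧ ¬v ≤ u := by
  constructor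
  · by_contra h
    rw [Set.not_nonempty_iff_eq_empty, Set.eq_empty_iff_forall_notMem] at h
    simp only [Set.mem_setOf_eq, not_and, not_not] at h
    have hch : IsChain (· ≤ ·) (insert v π) := by
      refine hπ.1.insert ?_
      intro u hu hne
      by_contra hc
      push_neg at hc
      exact hc.1 (h u hu hc.2)
    have := hπ.2 hch (Set.subset_insert _ _)
    exact hv (this ▸ Set.mem_insert v π)
  · rintro u₀ ⟨hu₀π, h₀v, hv₀⟩ u₁ ⟨hu₁π, h₁v, hv₁⟩ u huπ h0u hu1
    exact ⟨fun h => h₀v (h0u.trans h), fun h => hv₁ (h.trans hu1)⟩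
end

section
/- Let P be a finite poset and π, π' two distinct maximal chains of P. Let u, v ∈ π \ π' with v < u, and let N_v, N_u ⊆ π' be their sets of incomparable elements in π'. Then min N_v ≤ min N_u and max N_v ≤ max N_u. -/
variable {P : Type*} [Fintype P] [PartialOrder P]

/-- For `v < u` in `π \ π'`, with `N_v, N_u ⊆ π'` the sets of elements of `π'` incomparable
with `v` and `u` respectively, we have `min N_v ≤ min N_u` and `max N_v ≤ max N_u`. -/
theorem min_max_incomparable_mono (π π' : Set P)
    (hπ : IsMaxChain (· ≤ ·) π) (hπ' : IsMaxChain (· ≤ ·) π') (hne : π ≠ π')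
    (u v : P) (hu : u ∈ π \ π') (hv : v ∈ π \ π') (hvu : v < u)
    (a b : P)
    (ha : IsLeast {w ∈ π' | ¬w ≤ v ∧ ¬v ≤ w} a)
    (hb : IsLeast {w ∈ π' | ¬w ≤ u ∧ ¬u ≤ w} b)
    (a' b' : P)
    (ha' : IsGreatest {w ∈ π' | ¬w ≤ v ∧ ¬v ≤ w} a')
    (hb' : IsGreatest {w ∈ π' | ¬w ≤ u ∧ ¬u ≤ w} b') :
    a ≤ b ∧ a' ≤ b' := by
  obtain ⟨⟨haπ, hav, hva⟩, hamin⟩ := ha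
  obtain ⟨⟨hbπ, hbu, hub⟩, _⟩ := hb
  obtain ⟨⟨ha'π, ha'v, hva'⟩, _⟩ := ha'
  obtain ⟨⟨hb'π, hb'u, hub'⟩, hb'max⟩ := hb'
  constructor
  · rcases hπ'.1.total haπ hbπ with h | h
    · exact h
    · -- b ≤ a; show b ∈ N_v
      refine hamin ⟨hbπ, ?_, ?_⟩
      · intro hbv; exact hbu (hbv.trans hvu.le)
      · intro hvb; exact hva (hvb.trans h)
  · rcases hπ'.1.total ha'π hb'π with h | h
    · exact h
    · -- b' ≤ a'; show a' ∈ N_u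
      refine hb'max ⟨ha'π, ?_, ?_⟩
      · intro ha'u; exact hb'u (h.trans ha'u)
      · intro hua'; exact hva' (hvu.le.trans hua')
end

section
/- Let P be a finite poset and π, π' two distinct maximal chains of P. Then the minimal element of π \ π' and the minimal element of π' \ π are incomparable. Similarly, the maximal elements of π \ π' and π' \ π are incomparable. -/
variable {P : Type*} [Fintype P] [PartialOrder P]

lemma max_chain_mem_of_comparable {s : Set P} (hs : IsMaxChain (· ≤ ·) s) {c : P}
    (h : ∀ x ∈ s, c ≤ x ∨ x ≤ c) : c ∈ s := by
  have heq := hs.2 (hs.1.insert (fun x hx _ => h x hx)) (Set.subset_insert _ _)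
  rw [heq]
  exact Set.mem_insert _ _

/-- The minimal elements of `π \ π'` and `π' \ π` are incomparable, and likewise the
maximal elements. -/
theorem extreme_elements_incomparable (π π' : Set P)
    (hπ : IsMaxChain (· ≤ ·) π) (hπ' : IsMaxChain (· ≤ ·) π') (hne : π ≠ π')
    (a b : P) (ha : IsLeast (π \ π') a) (hb : IsLeast (π' \ π) b)
    (a' b' : P) (ha' : IsGreatest (π \ π') a') (hb' : IsGreatest (π' \ π) b') :
    (¬a ≤ b ∧ ¬b ≤ a) ∧ (¬a' ≤ b' ∧ ¬b' ≤ a') := by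
  have comp : ∀ {s : Set P}, IsChain (· ≤ ·) s → ∀ {x y}, x ∈ s → y ∈ s → x ≤ y ∨ y ≤ x := by
    intro s hs x y hx hy
    rcases eq_or_ne x y with rfl | hxy
    · exact Or.inl le_rfl
    · exact hs hx hy hxy
  refine ⟨⟨fun hab => ?_, fun hba => ?_⟩, fun hab => ?_, fun hba => ?_⟩
  · -- a ≤ b : then a comparable to all of π', so a ∈ π', contradiction
    refine ha.1.2 (max_chain_mem_of_comparable hπ' fun x hx => ?_)
    by_cases hxπ : x ∈ π
    · exact comp hπ.1 ha.1.1 hxπ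
    · exact Or.inl (hab.trans (hb.2 ⟨hx, hxπ⟩))
  · refine hb.1.2 (max_chain_mem_of_comparable hπ fun x hx => ?_)
    by_cases hxπ' : x ∈ π'
    · exact comp hπ'.1 hb.1.1 hxπ'
    · exact Or.inl (hba.trans (ha.2 ⟨hx, hxπ'⟩))
  · -- a' ≤ b' : then b' comparable to all of π, so b' ∈ π, contradiction
    refine hb'.1.2 (max_chain_mem_of_comparable hπ fun x hx => ?_)
    by_cases hxπ' : x ∈ π'
    · exact comp hπ'.1 hb'.1.1 hxπ'
    · exact Or.inr ((ha'.2 ⟨hx, hxπ'⟩).trans hab)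
  · refine ha'.1.2 (max_chain_mem_of_comparable hπ' fun x hx => ?_)
    by_cases hxπ : x ∈ π
    · exact comp hπ.1 ha'.1.1 hxπ
    · exact Or.inr ((hb'.2 ⟨hx, hxπ⟩).trans hba)
end

section
/- Let P = [1,m] × [1,n] ⊂ ℤ² with m, n > 1, and let π be an up-right path from (1,1) to (m,n) with vertices (u_i, v_i), i = 1,…,m+n−1. Then the number of antichains of P that intersect π exactly once equals Σ_{i=1}^{m+n−1} C(n+u_i−v_i−1, u_i−1)·C(m−u_i+v_i−1, v_i−1). -/
/-!
A path is a chain, so an antichain meets it at most once, and the antichains in question split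
according to the path vertex `c` they contain. The elements of a box in `α × β` incomparable to
`c` are those strictly north-west or strictly south-east of `c`, and any two elements on
opposite sides are incomparable; so an antichain through `c` is `c` together with an arbitrary
antichain of each of these two sub-boxes. Finally, an antichain of a product `X × Y` of chains is
determined by its two projections, which are arbitrary subsets of `X` and `Y` of equal size;
by Vandermonde there are `∑ₖ C(|X|, k) C(|Y|, k) = C(|X| + |Y|, |X|)` of them.
-/

open Finset

namespace Finset

variable {α ι : Type*}

noncomputable def antichains [LE α] (s : Finset α) : Finset (Finset α) :=
  open Classical in {t ∈ s.powerset | IsAntichain (· ≤ ·) (t : Set α)}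

@[simp]
lemma mem_antichains [LE α] {s t : Finset α} :
    t ∈ s.antichains ↔ t ⊆ s ∧ IsAntichain (· ≤ ·) (t : Set α) := by
  simp [antichains]

section Preorder

variable [Preorder α] [DecidableEq α]

lemma card_filter_mem_antichains [DecidableLE α] {s : Finset α} {c : α} (hc : c ∈ s) :
    #{t ∈ s.antichains | c ∈ t} = #{a ∈ s | ¬a ≤ c ∧ ¬c ≤ a}.antichains := by
  refine card_bij' (fun t _ ↦ t.erase c) (fun t _ ↦ insert c t) ?_ ?_ ?_ ?_
  · simp only [mem_filter, mem_antichains, and_imp]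
    intro t hts ht hct
    refine ⟨fun a ha ↦ ?_, ht.subset (by simp)⟩
    obtain ⟨hac, hat⟩ := mem_erase.1 ha
    exact mem_filter.2 ⟨hts hat, ht hat hct hac, ht hct hat hac.symm⟩
  · simp only [mem_filter, mem_antichains, and_imp]
    intro t hts ht
    refine ⟨⟨insert_subset hc fun a ha ↦ (mem_filter.1 (hts ha)).1, ?_⟩, mem_insert_self c t⟩
    rw [coe_insert]
    exact ht.insert (fun a ha _ ↦ (mem_filter.1 (hts ha)).2.1)
      (fun a ha _ ↦ (mem_filter.1 (hts ha)).2.2)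
  · intro t ht
    exact insert_erase (mem_filter.1 ht).2
  · intro t ht
    refine erase_insert fun hct ↦ ?_
    exact (mem_filter.1 ((mem_antichains.1 ht).1 hct)).2.1 le_rfl

lemma card_antichains_union {s t : Finset α} (hst : ∀ a ∈ s, ∀ b ∈ t, ¬a ≤ b ∧ ¬b ≤ a) :
    #(s ∪ t).antichains = #s.antichains * #t.antichains := by
  have hdisj : Disjoint s t :=
    disjoint_left.2 fun a has hat ↦ (hst a has a hat).1 le_rfl
  rw [← card_product]
  refine card_bij' (fun u _ ↦ (u ∩ s, u ∩ t)) (fun v _ ↦ v.1 ∪ v.2) ?_ ?_ ?_ ?_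
  · simp only [mem_antichains, mem_product]
    intro u ⟨_, hu⟩
    exact ⟨⟨inter_subset_right, hu.subset (by simp)⟩, inter_subset_right, hu.subset (by simp)⟩
  · simp only [mem_antichains, mem_product, coe_union]
    intro v ⟨⟨hvs, hv₁⟩, hvt, hv₂⟩
    refine ⟨union_subset_union hvs hvt, isAntichain_union.2 ⟨hv₁, hv₂, ?_⟩⟩
    intro a ha b hb _
    exact hst a (hvs ha) b (hvt hb)
  · intro u hu
    rw [← inter_union_distrib_left, inter_eq_left.2 (mem_antichains.1 hu).1]
  · simp only [mem_antichains, mem_product]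
    intro v ⟨⟨hvs, _⟩, hvt, _⟩
    simp [union_inter_distrib_right, inter_eq_left.2 hvs, inter_eq_left.2 hvt,
      disjoint_iff_inter_eq_empty.1 (hdisj.mono_left hvs),
      disjoint_iff_inter_eq_empty.1 (hdisj.symm.mono_left hvt)]

lemma card_filter_exists_mem_antichains [LinearOrder ι] {f : ι → α} {I : Finset ι}
    (hf : StrictMonoOn f I) (s : Finset α) :
    #{t ∈ s.antichains | ∃ i ∈ I, f i ∈ t} = ∑ i ∈ I, #{t ∈ s.antichains | f i ∈ t} := by
  rw [← card_biUnion]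
  · congr 1
    ext t
    simp only [mem_filter, mem_biUnion]
    tauto
  · intro i hi j hj hij
    refine disjoint_left.2 fun t hti htj ↦ ?_
    simp only [mem_filter, mem_antichains] at hti htj
    obtain ⟨⟨-, ht⟩, hit⟩ := hti
    rcases hij.lt_or_gt with h | h
    · exact ht.not_lt hit htj.2 (hf hi hj h)
    · exact ht.not_lt htj.2 hit (hf hj hi h)

end Preorder

end Finset

lemma Set.ncard_inter_eq_one_iff_of_isAntichain_of_isChain {α : Type*} [LE α] {A C : Set α}
    (hA : IsAntichain (· ≤ ·) A) (hC : IsChain (· ≤ ·) C) :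
    (A ∩ C).ncard = 1 ↔ (A ∩ C).Nonempty := by
  refine ⟨fun h ↦ Set.nonempty_of_ncard_ne_zero (by omega), fun ⟨a, ha⟩ ↦ ?_⟩
  have hAC := inter_subsingleton_of_isAntichain_of_isChain hA hC
  exact Set.ncard_eq_one.2 ⟨a, hAC.eq_singleton_of_mem ha⟩

lemma Nat.sum_range_choose_mul_choose (a b : ℕ) :
    ∑ k ∈ range (a + 1), a.choose k * b.choose k = (a + b).choose a := by
  rw [Nat.add_choose_eq, Finset.Nat.sum_antidiagonal_eq_sum_range_succ_mk,
    ← sum_range_reflect]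
  refine sum_congr rfl fun k hk ↦ ?_
  rw [mem_range] at hk
  rw [add_tsub_cancel_right, Nat.choose_symm (by omega)]

lemma Finset.card_filter_card_eq_powerset_product {α β : Type*} (X : Finset α) (Y : Finset β) :
    #{st ∈ X.powerset ×ˢ Y.powerset | #st.1 = #st.2} = (#X + #Y).choose #X := by
  rw [card_eq_sum_card_fiberwise (f := fun st ↦ #st.1) (t := range (#X + 1)),
    ← Nat.sum_range_choose_mul_choose]
  · refine sum_congr rfl fun k _ ↦ ?_
    rw [← card_powersetCard, ← card_powersetCard, ← card_product]
    congr 1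
    ext ⟨S, T⟩
    simp only [mem_filter, mem_product, mem_powerset, mem_powersetCard]
    constructor
    · rintro ⟨⟨⟨hS, hT⟩, hST⟩, rfl⟩
      exact ⟨⟨hS, rfl⟩, hT, hST.symm⟩
    · rintro ⟨⟨hS, rfl⟩, hT, hTS⟩
      exact ⟨⟨⟨hS, hT⟩, hTS.symm⟩, rfl⟩
  · intro st hst
    rw [mem_coe, mem_filter, mem_product, mem_powerset] at hst
    exact mem_coe.2 (mem_range_succ_iff.2 (card_le_card hst.1.1))

lemma isAntichain_range_prodMk_of_strictMono_of_strictAnti {ι α β : Type*} [LinearOrder ι]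
    [Preorder α] [Preorder β] {f : ι → α} {g : ι → β} (hf : StrictMono f) (hg : StrictAnti g) :
    IsAntichain (· ≤ ·) (Set.range fun i ↦ (f i, g i)) := by
  rintro _ ⟨i, rfl⟩ _ ⟨j, rfl⟩ hne ⟨hfij, hgij⟩
  have hij : i ≠ j := fun h ↦ hne (h ▸ rfl)
  rcases hij.lt_or_gt with h | h
  · exact (hg h).not_ge hgij
  · exact (hf h).not_ge hfij

section LinearOrder

variable {α β : Type*} [LinearOrder α] [LinearOrder β]

lemma Prod.not_le_and_not_ge_iff {a c : α × β} :
    ¬a ≤ c ∧ ¬c ≤ a ↔ a.1 < c.1 ∧ c.2 < a.2 ∨ c.1 < a.1 ∧ a.2 < c.2 := by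
  simp only [Prod.le_def, not_and_or, not_le]
  constructor
  · rintro ⟨h | h, h' | h'⟩
    · exact absurd h h'.asymm
    · exact Or.inr ⟨h, h'⟩
    · exact Or.inl ⟨h', h⟩
    · exact absurd h h'.asymm
  · rintro (⟨h, h'⟩ | ⟨h, h'⟩)
    · exact ⟨Or.inr h', Or.inl h⟩
    · exact ⟨Or.inl h, Or.inr h'⟩

lemma IsAntichain.injOn_fst {A : Set (α × β)} (hA : IsAntichain (· ≤ ·) A) :
    A.InjOn Prod.fst := by
  intro a ha b hb hab
  by_contra hne
  rcases le_total a.2 b.2 with h | h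
  · exact hA ha hb hne ⟨hab.le, h⟩
  · exact hA hb ha (Ne.symm hne) ⟨hab.ge, h⟩

lemma IsAntichain.injOn_snd {A : Set (α × β)} (hA : IsAntichain (· ≤ ·) A) :
    A.InjOn Prod.snd := by
  intro a ha b hb hab
  by_contra hne
  rcases le_total a.1 b.1 with h | h
  · exact hA ha hb hne ⟨h, hab.le⟩
  · exact hA hb ha (Ne.symm hne) ⟨h, hab.ge⟩

lemma IsAntichain.filter_fst_le_eq_filter_le_snd {A : Finset (α × β)}
    (hA : IsAntichain (· ≤ ·) (A : Set (α × β))) {c : α × β} (hc : c ∈ A) :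
    {a ∈ A | a.1 ≤ c.1} = {a ∈ A | c.2 ≤ a.2} := by
  refine filter_congr fun a ha ↦ ?_
  rcases eq_or_ne a c with rfl | hne
  · simp
  · rcases Prod.not_le_and_not_ge_iff.1 ⟨hA ha hc hne, hA hc ha hne.symm⟩ with h | h
    · exact iff_of_true h.1.le h.2.le
    · exact iff_of_false h.1.not_ge h.2.not_ge

lemma IsAntichain.card_filter_image_fst_le {A : Finset (α × β)}
    (hA : IsAntichain (· ≤ ·) (A : Set (α × β))) {c : α × β} (hc : c ∈ A) :
    #{x ∈ A.image Prod.fst | x ≤ c.1} = #{y ∈ A.image Prod.snd | c.2 ≤ y} := by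
  rw [filter_image, filter_image,
    card_image_of_injOn (hA.injOn_fst.mono (coe_subset.2 (filter_subset _ _))),
    card_image_of_injOn (hA.injOn_snd.mono (coe_subset.2 (filter_subset _ _)))]
  exact congrArg card (hA.filter_fst_le_eq_filter_le_snd hc)

lemma Finset.strictAntiOn_card_filter_le (T : Finset β) :
    StrictAntiOn (fun y ↦ #{z ∈ T | y ≤ z}) T := by
  intro y hy y' _ hyy'
  refine card_lt_card ⟨monotone_filter_right T fun z _ h ↦ hyy'.le.trans h, fun h ↦ ?_⟩
  exact hyy'.not_ge (mem_filter.1 (h (mem_filter.2 ⟨hy, le_rfl⟩))).2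

lemma IsAntichain.subset_of_image_eq {A B : Finset (α × β)}
    (hA : IsAntichain (· ≤ ·) (A : Set (α × β))) (hB : IsAntichain (· ≤ ·) (B : Set (α × β)))
    (h₁ : A.image Prod.fst = B.image Prod.fst) (h₂ : A.image Prod.snd = B.image Prod.snd) :
    A ⊆ B := by
  intro c hc
  obtain ⟨d, hd, hdc⟩ := mem_image.1 (h₁ ▸ mem_image_of_mem Prod.fst hc)
  have hcard := hA.card_filter_image_fst_le hc
  rw [h₁, h₂, ← hdc, hB.card_filter_image_fst_le hd] at hcard
  have : d.2 = c.2 := (B.image Prod.snd).strictAntiOn_card_filter_le.injOn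
    (mem_image_of_mem _ hd) (h₂ ▸ mem_image_of_mem _ hc) hcard
  rwa [← Prod.ext hdc this]

lemma exists_isAntichain_image_fst_image_snd {S : Finset α} {T : Finset β} (h : #S = #T) :
    ∃ A : Finset (α × β), IsAntichain (· ≤ ·) (A : Set (α × β)) ∧
      A.image Prod.fst = S ∧ A.image Prod.snd = T := by
  set f := S.orderEmbOfFin rfl
  set g := T.orderEmbOfFin h.symm
  refine ⟨univ.image fun i ↦ (f i, g i.rev), ?_, ?_, ?_⟩
  · rw [coe_image, coe_univ, Set.image_univ]
    exact isAntichain_range_prodMk_of_strictMono_of_strictAnti f.strictMono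
      (g.strictMono.comp_strictAnti Fin.rev_strictAnti)
  · rw [image_image]
    exact image_orderEmbOfFin_univ S rfl
  · rw [image_image, show Prod.snd ∘ (fun i ↦ (f i, g i.rev)) = g ∘ Fin.rev from rfl,
      ← image_image, image_univ_of_surjective Fin.rev_surjective]
    exact image_orderEmbOfFin_univ T h.symm

lemma Finset.card_antichains_product (X : Finset α) (Y : Finset β) :
    #(X ×ˢ Y).antichains = (#X + #Y).choose #X := by
  rw [← card_filter_card_eq_powerset_product]
  refine card_bij (fun A _ ↦ (A.image Prod.fst, A.image Prod.snd)) ?_ ?_ ?_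
  · intro A hA
    obtain ⟨hAXY, hA⟩ := mem_antichains.1 hA
    simp only [mem_filter, mem_product, mem_powerset, image_subset_iff]
    refine ⟨⟨fun a ha ↦ (mem_product.1 (hAXY ha)).1, fun a ha ↦ (mem_product.1 (hAXY ha)).2⟩, ?_⟩
    rw [card_image_of_injOn hA.injOn_fst, card_image_of_injOn hA.injOn_snd]
  · intro A hA B hB hAB
    obtain ⟨h₁, h₂⟩ := Prod.ext_iff.1 hAB
    have hA := (mem_antichains.1 hA).2
    have hB := (mem_antichains.1 hB).2
    exact (hA.subset_of_image_eq hB h₁ h₂).antisymm (hB.subset_of_image_eq hA h₁.symm h₂.symm)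
  · rintro ⟨S, T⟩ hST
    simp only [mem_filter, mem_product, mem_powerset] at hST
    obtain ⟨⟨hSX, hTY⟩, hST⟩ := hST
    obtain ⟨A, hA, rfl, rfl⟩ := exists_isAntichain_image_fst_image_snd hST
    refine ⟨A, mem_antichains.2 ⟨fun a ha ↦ ?_, hA⟩, rfl⟩
    exact mem_product.2 ⟨hSX (mem_image_of_mem _ ha), hTY (mem_image_of_mem _ ha)⟩

lemma Finset.card_filter_mem_antichains_prod {s : Finset (α × β)} {c : α × β} (hc : c ∈ s) :
    #{t ∈ s.antichains | c ∈ t} =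
      #{a ∈ s | a.1 < c.1 ∧ c.2 < a.2}.antichains *
        #{a ∈ s | c.1 < a.1 ∧ a.2 < c.2}.antichains := by
  rw [card_filter_mem_antichains hc, ← card_antichains_union, ← filter_or]
  · rw [filter_congr fun a _ ↦ Prod.not_le_and_not_ge_iff]
  · intro a ha b hb
    rw [mem_filter] at ha hb
    exact Prod.not_le_and_not_ge_iff.2 (Or.inl ⟨ha.2.1.trans hb.2.1, hb.2.2.trans ha.2.2⟩)

lemma Finset.card_filter_mem_antichains_Icc [LocallyFiniteOrder α] [LocallyFiniteOrder β]
    {a b c : α × β} (hc : c ∈ Icc a b) :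
    #{t ∈ (Icc a b).antichains | c ∈ t} =
      (#(Ico a.1 c.1) + #(Ioc c.2 b.2)).choose #(Ico a.1 c.1) *
        (#(Ioc c.1 b.1) + #(Ico a.2 c.2)).choose #(Ioc c.1 b.1) := by
  obtain ⟨⟨ha₁, ha₂⟩, hb₁, hb₂⟩ : (a.1 ≤ c.1 ∧ a.2 ≤ c.2) ∧ c.1 ≤ b.1 ∧ c.2 ≤ b.2 :=
    mem_Icc.1 hc
  have hNW : {x ∈ Icc a b | x.1 < c.1 ∧ c.2 < x.2} = Ico a.1 c.1 ×ˢ Ioc c.2 b.2 := by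
    ext x
    simp only [mem_filter, mem_Icc, mem_Ico, mem_Ioc, mem_product, Prod.le_def]
    grind
  have hSE : {x ∈ Icc a b | c.1 < x.1 ∧ x.2 < c.2} = Ioc c.1 b.1 ×ˢ Ico a.2 c.2 := by
    ext x
    simp only [mem_filter, mem_Icc, mem_Ico, mem_Ioc, mem_product, Prod.le_def]
    grind
  rw [card_filter_mem_antichains_prod hc, hNW, hSE,
    card_antichains_product, card_antichains_product]

end LinearOrder

lemma Finset.card_filter_mem_antichains_Icc_one_one {m n : ℕ} {c : ℕ × ℕ}
    (hc : c ∈ Icc (1, 1) (m, n)) :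
    #{t ∈ (Icc (1, 1) (m, n)).antichains | c ∈ t} =
      (n + c.1 - c.2 - 1).choose (c.1 - 1) * (m - c.1 + c.2 - 1).choose (c.2 - 1) := by
  rw [card_filter_mem_antichains_Icc hc, Nat.card_Ico, Nat.card_Ioc, Nat.card_Ioc, Nat.card_Ico]
  obtain ⟨⟨hu, hv⟩, hum, hvn⟩ : (1 ≤ c.1 ∧ 1 ≤ c.2) ∧ c.1 ≤ m ∧ c.2 ≤ n := mem_Icc.1 hc
  congr 1
  · congr 1
    omega
  · rw [Nat.choose_symm_add]
    congr 1
    omega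

lemma Finset.natCard_antichains_inter_image_ncard_eq_one {α ι : Type*} [Preorder α]
    [DecidableEq α] [LinearOrder ι] {f : ι → α} {I : Finset ι} (hf : StrictMonoOn f I)
    (s : Finset α) :
    Nat.card {t : Finset α // (t : Set α) ⊆ s ∧ IsAntichain (· ≤ ·) (t : Set α) ∧
        ((t : Set α) ∩ f '' I).ncard = 1} =
      ∑ i ∈ I, #{t ∈ s.antichains | f i ∈ t} := by
  have hchain : IsChain (· ≤ ·) (f '' I) := by
    rintro _ ⟨i, hi, rfl⟩ _ ⟨j, hj, rfl⟩ -
    exact (le_total i j).imp (hf.monotoneOn hi hj) (hf.monotoneOn hj hi)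
  have hmem (t : Finset α) : ((t : Set α) ⊆ s ∧ IsAntichain (· ≤ ·) (t : Set α) ∧
      ((t : Set α) ∩ f '' I).ncard = 1) ↔ t ∈ {t ∈ s.antichains | ∃ i ∈ I, f i ∈ t} := by
    rw [mem_filter, mem_antichains, coe_subset, and_assoc]
    refine and_congr_right fun _ ↦ and_congr_right fun ht ↦ ?_
    rw [Set.ncard_inter_eq_one_iff_of_isAntichain_of_isChain ht hchain]
    constructor
    · rintro ⟨_, hit, i, hi, rfl⟩
      exact ⟨i, hi, hit⟩
    · rintro ⟨i, hi, hit⟩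
      exact ⟨f i, hit, i, hi, rfl⟩
  rw [Nat.card_congr (Equiv.subtypeEquivRight hmem), Nat.card_eq_finsetCard,
    card_filter_exists_mem_antichains hf]

lemma strictMonoOn_of_lattice_path_steps {p : ℕ → ℕ × ℕ} {N : ℕ}
    (hstep : ∀ i, 1 ≤ i → i < N → p (i + 1) = p i + (1, 0) ∨ p (i + 1) = p i + (0, 1)) :
    StrictMonoOn p (Set.Icc 1 N) := by
  refine strictMonoOn_of_lt_add_one Set.ordConnected_Icc fun i _ hi hi' ↦ ?_
  rcases hstep i hi.1 hi'.2 with h | h <;> simp [h, Prod.lt_iff]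

theorem count_extreme_rays_path_general (m n : ℕ)
    (p : ℕ → ℕ × ℕ) (h1 : p 1 = (1, 1)) (h2 : p (m + n - 1) = (m, n))
    (hstep : ∀ i, 1 ≤ i → i < m + n - 1 →
      p (i + 1) = p i + (1, 0) ∨ p (i + 1) = p i + (0, 1)) :
    Nat.card {A : Finset (ℕ × ℕ) //
        (↑A : Set (ℕ × ℕ)) ⊆ Set.Icc (1, 1) (m, n) ∧
        IsAntichain (· ≤ ·) (↑A : Set (ℕ × ℕ)) ∧
        ((↑A : Set (ℕ × ℕ)) ∩ {w | ∃ i, 1 ≤ i ∧ i ≤ m + n - 1 ∧ p i = w}).ncard = 1} =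
      ∑ i ∈ Finset.Icc 1 (m + n - 1),
        (n + (p i).1 - (p i).2 - 1).choose ((p i).1 - 1) *
          (m - (p i).1 + (p i).2 - 1).choose ((p i).2 - 1) := by
  have hp : StrictMonoOn p ↑(Finset.Icc 1 (m + n - 1)) := by
    rw [coe_Icc]
    exact strictMonoOn_of_lattice_path_steps hstep
  have hpath : {w | ∃ i, 1 ≤ i ∧ i ≤ m + n - 1 ∧ p i = w} = p '' ↑(Finset.Icc 1 (m + n - 1)) := by
    ext w
    simp [and_assoc]
  rw [hpath, ← coe_Icc, natCard_antichains_inter_image_ncard_eq_one hp]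
  refine sum_congr rfl fun i hi ↦ ?_
  obtain ⟨hi₁, hiN⟩ := mem_Icc.1 hi
  refine card_filter_mem_antichains_Icc_one_one (mem_Icc.2 ⟨?_, ?_⟩)
  · exact h1 ▸ hp.monotoneOn (by simp; omega) hi hi₁
  · exact h2 ▸ hp.monotoneOn hi (by simp; omega) hiN

/-- The number of antichains of the grid poset `[1,m] × [1,n]` intersecting a given up-right
path `π` (with vertices `p 1 = (1,1), …, p (m+n-1) = (m,n)`) exactly once equals
`∑_{i=1}^{m+n-1} C(n+u_i-v_i-1, u_i-1) · C(m-u_i+v_i-1, v_i-1)`. -/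
theorem count_extreme_rays_path (m n : ℕ) (hm : 1 < m) (hn : 1 < n)
    (p : ℕ → ℕ × ℕ) (h1 : p 1 = (1, 1)) (h2 : p (m + n - 1) = (m, n))
    (hstep : ∀ i, 1 ≤ i → i < m + n - 1 →
      p (i + 1) = p i + (1, 0) ∨ p (i + 1) = p i + (0, 1)) :
    Nat.card {A : Finset (ℕ × ℕ) //
        (↑A : Set (ℕ × ℕ)) ⊆ Set.Icc (1, 1) (m, n) ∧
        IsAntichain (· ≤ ·) (↑A : Set (ℕ × ℕ)) ∧
        ((↑A : Set (ℕ × ℕ)) ∩ {w | ∃ i, 1 ≤ i ∧ i ≤ m + n - 1 ∧ p i = w}).ncard = 1} =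
      ∑ i ∈ Finset.Icc 1 (m + n - 1),
        (n + (p i).1 - (p i).2 - 1).choose ((p i).1 - 1) *
          (m - (p i).1 + (p i).2 - 1).choose ((p i).2 - 1) :=
  count_extreme_rays_path_general m n p h1 h2 hstep
end

section
/- Let P be a finite poset and fix a maximal chain ∅ = U₀ ⋖ U₁ ⋖ … ⋖ U_{|P|} = P of upper sets of P, with v_k = U_k \ U_{k−1}. The linear map A on ℝ^P defined on the basis indicator vectors by sending the indicator of U_k to the indicator of ∂U_k (the set of minimal elements of U_k), for k = 1, …, |P|, has determinant ±1; in particular it is volume preserving. -/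
variable {P : Type*} [Fintype P] [PartialOrder P]

/-- For a maximal chain `∅ = U₀ ⋖ … ⋖ U_{|P|} = P` of upper sets, the linear map sending the
indicator vector of each `U_k` to the indicator vector of its set of minimal elements `∂U_k`
has determinant `±1`; in particular it is volume preserving. -/
theorem det_upper_to_antichain_map (U : ℕ → Set P)
    (hup : ∀ k, IsUpperSet (U k))
    (h0 : U 0 = ∅) (hN : U (Fintype.card P) = Set.univ)
    (hchain : ∀ k < Fintype.card P, U k ⊆ U (k + 1) ∧ (U (k + 1) \ U k).ncard = 1)
    (A : (P → ℝ) →ₗ[ℝ] (P → ℝ))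
    (hA : ∀ k, 1 ≤ k → k ≤ Fintype.card P →
      A ((U k).indicator fun _ => (1 : ℝ)) =
        Set.indicator {u | u ∈ U k ∧ ∀ w ∈ U k, w ≤ u → w = u} (fun _ => (1 : ℝ))) :
    LinearMap.det A = 1 ∨ LinearMap.det A = -1 := by
  classical
  left
  set N := Fintype.card P with hNdef
  -- monotonicity of the chain
  have mono : ∀ k : ℕ, k ≤ N → ∀ j : ℕ, j ≤ k → U j ⊆ U k := by
    intro k
    induction k with
    | zero =>
      intro _ j hj
      interval_cases j
      exact subset_rfl
    | succ k ih =>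
      intro hk j hj
      rcases hj.lt_or_eq with h | h
      · exact (ih (by omega) j (Nat.lt_succ_iff.mp h)).trans
          (hchain k (by omega)).1
      · rw [h]
  -- choose the new element at each step
  have hvex : ∀ k : Fin N, ∃ a : P, U ((k : ℕ) + 1) \ U (k : ℕ) = {a} :=
    fun k => Set.ncard_eq_one.mp (hchain k k.isLt).2
  choose v hv using hvex
  have hvmem : ∀ k : Fin N, v k ∈ U ((k : ℕ) + 1) ∧ v k ∉ U (k : ℕ) := by
    intro k
    have : v k ∈ U ((k : ℕ) + 1) \ U (k : ℕ) := by rw [hv k]; rfl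
    exact this
  -- membership criterion
  have hvU : ∀ (k : Fin N) (m : ℕ), m ≤ N → (v k ∈ U m ↔ (k : ℕ) < m) := by
    intro k m hm
    constructor
    · intro hmem
      by_contra h
      exact (hvmem k).2 (mono (k : ℕ) (by omega) m (by omega) hmem)
    · intro h
      exact mono m hm ((k : ℕ) + 1) (by omega) (hvmem k).1
  -- injectivity and the resulting equivalence
  have vinj : Function.Injective v := by
    intro i j hij
    by_contra hne
    rcases lt_trichotomy i j with h | h | h
    · have : v i ∈ U (j : ℕ) := (hvU i (j : ℕ) (by omega)).mpr (by exact_mod_cast h)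
      rw [hij] at this
      exact (hvmem j).2 this
    · exact hne h
    · have : v j ∈ U (i : ℕ) := (hvU j (i : ℕ) (by omega)).mpr (by exact_mod_cast h)
      rw [← hij] at this
      exact (hvmem i).2 this
  have vbij : Function.Bijective v :=
    (Fintype.bijective_iff_injective_and_card v).mpr ⟨vinj, by simp [hNdef]⟩
  let σ : Fin N ≃ P := Equiv.ofBijective v vbij
  have hσ : ∀ k : Fin N, σ k = v k := fun k => rfl
  -- minimality of v k in U (k+1)
  have hmin : ∀ k : Fin N,
      v k ∈ {u | u ∈ U ((k : ℕ) + 1) ∧ ∀ w ∈ U ((k : ℕ) + 1), w ≤ u → w = u} := by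
    intro k
    refine ⟨(hvmem k).1, fun w hw hle => ?_⟩
    by_contra hne
    have hwk : w ∈ U (k : ℕ) := by
      by_contra hwk
      have : w ∈ U ((k : ℕ) + 1) \ U (k : ℕ) := ⟨hw, hwk⟩
      rw [hv k] at this
      exact hne this
    exact (hvmem k).2 (hup (k : ℕ) hle hwk)
  have hσs : ∀ k : Fin N, σ.symm (v k) = k := fun k => σ.symm_apply_apply k
  -- the two triangular matrices
  let Bm : Matrix P P ℝ := fun p q => (U ((σ.symm q : ℕ) + 1)).indicator (fun _ => (1 : ℝ)) p
  let Cm : Matrix P P ℝ := fun p q =>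
    Set.indicator {u | u ∈ U ((σ.symm q : ℕ) + 1) ∧
      ∀ w ∈ U ((σ.symm q : ℕ) + 1), w ≤ u → w = u} (fun _ => (1 : ℝ)) p
  have hMB : (LinearMap.toMatrix' A) * Bm = Cm := by
    ext p q
    have : ((LinearMap.toMatrix' A) * Bm) p q
        = ((LinearMap.toMatrix' A).mulVec fun r => Bm r q) p := by
      simp [Matrix.mul_apply, Matrix.mulVec, dotProduct]
    rw [this]
    have hcol : (fun r => Bm r q) = (U ((σ.symm q : ℕ) + 1)).indicator (fun _ => (1 : ℝ)) := rfl
    rw [hcol]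
    have hml : (LinearMap.toMatrix' A).mulVec ((U ((σ.symm q : ℕ) + 1)).indicator fun _ => (1 : ℝ))
        = A ((U ((σ.symm q : ℕ) + 1)).indicator fun _ => (1 : ℝ)) := by
      rw [← Matrix.toLin'_apply, Matrix.toLin'_toMatrix']
    rw [hml, hA ((σ.symm q : ℕ) + 1) (by omega) (by have := (σ.symm q).isLt; omega)]

  -- determinant of Bm
  have hdetB : Bm.det = 1 := by
    rw [← Matrix.det_submatrix_equiv_self σ Bm]
    have hBT : (Bm.submatrix σ σ).BlockTriangular id := by
      intro i j hij
      have hne : v i ∉ U ((j : ℕ) + 1) := by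
        rw [hvU i ((j : ℕ) + 1) (by omega)]
        simp only [id] at hij
        omega
      show (U ((σ.symm (σ j) : ℕ) + 1)).indicator (fun _ => (1 : ℝ)) (σ i) = 0
      rw [show σ i = v i from rfl, show σ j = v j from rfl, hσs]
      exact Set.indicator_of_notMem hne _
    rw [Matrix.det_of_upperTriangular hBT]
    apply Finset.prod_eq_one
    intro i _
    show (U ((σ.symm (σ i) : ℕ) + 1)).indicator (fun _ => (1 : ℝ)) (σ i) = 1
    rw [show σ i = v i from rfl, hσs]
    exact Set.indicator_of_mem (hvmem i).1 _
  -- determinant of Cm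
  have hdetC : Cm.det = 1 := by
    rw [← Matrix.det_submatrix_equiv_self σ Cm]
    have hCT : (Cm.submatrix σ σ).BlockTriangular id := by
      intro i j hij
      have hne : v i ∉ {u | u ∈ U ((j : ℕ) + 1) ∧
          ∀ w ∈ U ((j : ℕ) + 1), w ≤ u → w = u} := by
        intro hmem
        have h1 : v i ∈ U ((j : ℕ) + 1) := hmem.1
        rw [hvU i ((j : ℕ) + 1) (by omega)] at h1
        simp only [id] at hij
        omega
      show Set.indicator {u | u ∈ U ((σ.symm (σ j) : ℕ) + 1) ∧
          ∀ w ∈ U ((σ.symm (σ j) : ℕ) + 1), w ≤ u → w = u} (fun _ => (1 : ℝ)) (σ i) = 0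
      rw [show σ i = v i from rfl, show σ j = v j from rfl, hσs]
      exact Set.indicator_of_notMem hne _
    rw [Matrix.det_of_upperTriangular hCT]
    apply Finset.prod_eq_one
    intro i _
    show Set.indicator {u | u ∈ U ((σ.symm (σ i) : ℕ) + 1) ∧
        ∀ w ∈ U ((σ.symm (σ i) : ℕ) + 1), w ≤ u → w = u} (fun _ => (1 : ℝ)) (σ i) = 1
    rw [show σ i = v i from rfl, hσs]
    exact Set.indicator_of_mem (hmin i) _
  -- conclude
  have hdetA : (LinearMap.toMatrix' A).det = 1 := by
    have h := congrArg Matrix.det hMB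
    rw [Matrix.det_mul, hdetB, mul_one, hdetC] at h
    exact h
  rw [← LinearMap.det_toMatrix' A, hdetA]
end

section
/- Let X₁, …, X_n be independent random variables with X_i exponentially distributed with rate λ_i > 0, and let v₁, …, v_n ∈ ℝ₊^n be linearly independent vectors. Let C = {Σ c_i v_i : c_i ≥ 0} be their conical span and V the matrix with columns v_i. Then P((X₁,…,X_n) ∈ C) = |det V| · Π_{i=1}^n λ_i / ⟨v_i, λ⟩, where λ = (λ₁,…,λ_n). -/
/-!
Substitute `x = V c` with `c` in the nonnegative orthant; the Jacobian is `|det V|`.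
Since `⟨λ, V c⟩ = Σⱼ ⟨vⱼ, λ⟩ cⱼ`, the joint density `∏ λᵢ e^{-⟨λ, x⟩}` at `V c` equals
`∏ᵢ λᵢ / ⟨vᵢ, λ⟩` times the joint density of independent exponentials with rates `⟨vⱼ, λ⟩`
at `c`, and the latter has total mass `1` on the orthant.
-/

open MeasureTheory ProbabilityTheory
open scoped ENNReal Matrix

namespace MeasureTheory

variable {α : Type*} [MeasurableSpace α]

theorem lintegral_fin_nat_prod_eq_prod {n : ℕ} {μ : Fin n → Measure α} [∀ i, SigmaFinite (μ i)]
    {f : Fin n → α → ℝ≥0∞} (hf : ∀ i, Measurable (f i)) :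
    ∫⁻ x, ∏ i, f i (x i) ∂Measure.pi μ = ∏ i, ∫⁻ x, f i x ∂μ i := by
  induction n with
  | zero => simp
  | succ n ih =>
    calc
      _ = ∫⁻ x : α × (Fin n → α), f 0 x.1 * ∏ i : Fin n, f i.succ (x.2 i)
            ∂(μ 0).prod (Measure.pi fun i ↦ μ i.succ) := by
        rw [← (measurePreserving_piFinSuccAbove μ 0).symm.lintegral_comp_emb
          (MeasurableEquiv.measurableEmbedding _)]
        simp [MeasurableEquiv.piFinSuccAbove_symm_apply, Fin.insertNthEquiv,
          Fin.prod_univ_succ, Fin.zero_succAbove]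
      _ = (∫⁻ x, f 0 x ∂μ 0) * ∏ i : Fin n, ∫⁻ x, f i.succ x ∂μ i.succ := by
        rw [← ih fun i ↦ hf i.succ]
        exact lintegral_prod_mul (hf 0).aemeasurable (Finset.measurable_prod _
          fun (i : Fin n) _ ↦ (hf i.succ).comp (measurable_pi_apply i)).aemeasurable
      _ = ∏ i, ∫⁻ x, f i x ∂μ i := (Fin.prod_univ_succ fun i ↦ ∫⁻ x, f i x ∂μ i).symm

variable {ι : Type*} [Fintype ι] {μ : ι → Measure α} [∀ i, SigmaFinite (μ i)]
  {f : ι → α → ℝ≥0∞}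

theorem lintegral_fintype_prod_eq_prod (hf : ∀ i, Measurable (f i)) :
    ∫⁻ x, ∏ i, f i (x i) ∂Measure.pi μ = ∏ i, ∫⁻ x, f i x ∂μ i := by
  let e := (Fintype.equivFin ι).symm
  rw [← (measurePreserving_piCongrLeft _ e).lintegral_comp_emb
    (MeasurableEquiv.measurableEmbedding _)]
  simp_rw [← e.prod_comp, MeasurableEquiv.coe_piCongrLeft, Equiv.piCongrLeft_apply_apply]
  exact lintegral_fin_nat_prod_eq_prod fun i ↦ hf (e i)

theorem Measure.pi_withDensity (hf : ∀ i, Measurable (f i))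
    [∀ i, SigmaFinite ((μ i).withDensity (f i))] :
    Measure.pi (fun i ↦ (μ i).withDensity (f i)) =
      (Measure.pi μ).withDensity fun x ↦ ∏ i, f i (x i) := by
  refine Measure.pi_eq fun s hs ↦ ?_
  have hind : (Set.univ.pi s).indicator (fun x ↦ ∏ i, f i (x i)) =
      fun x ↦ ∏ i, (s i).indicator (f i) (x i) := by
    ext x
    classical simp [Set.indicator, Finset.prod_ite_zero]
  rw [withDensity_apply _ (MeasurableSet.univ_pi hs),
    ← lintegral_indicator (MeasurableSet.univ_pi hs), hind,
    lintegral_fintype_prod_eq_prod fun i ↦ (hf i).indicator (hs i)]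
  simp_rw [lintegral_indicator (hs _), withDensity_apply _ (hs _)]

end MeasureTheory

section Matrix

variable {ι : Type*} [Fintype ι] [DecidableEq ι] {M : Matrix ι ι ℝ}

theorem Matrix.vecMul_pos_of_nonneg_of_det_ne_zero (hM : ∀ i j, 0 ≤ M i j) (hdet : M.det ≠ 0)
    {w : ι → ℝ} (hw : ∀ i, 0 < w i) (j : ι) : 0 < (w ᵥ* M) j := by
  have hterm : ∀ i ∈ Finset.univ, 0 ≤ w i * M i j := fun i _ ↦ mul_nonneg (hw i).le (hM i j)
  refine (Finset.sum_nonneg hterm).lt_of_ne fun hzero ↦ hdet ?_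
  refine Matrix.det_eq_zero_of_column_eq_zero j fun i ↦ ?_
  have := (Finset.sum_eq_zero_iff_of_nonneg hterm).mp hzero.symm i (Finset.mem_univ i)
  exact (mul_eq_zero.mp this).resolve_left (hw i).ne'

theorem MeasureTheory.lintegral_image_mulVec (hdet : M.det ≠ 0) {s : Set (ι → ℝ)}
    (hs : MeasurableSet s) (g : (ι → ℝ) → ℝ≥0∞) :
    ∫⁻ x in M.mulVec '' s, g x = ENNReal.ofReal |M.det| * ∫⁻ c in s, g (M *ᵥ c) := by
  have hinj : Function.Injective M.mulVec :=
    Matrix.mulVec_injective_iff_isUnit.mpr (M.isUnit_iff_isUnit_det.mpr hdet.isUnit)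
  let L := LinearMap.toContinuousLinearMap M.mulVecLin
  have hdetL : L.det = M.det := LinearMap.det_toLin' M
  rw [← lintegral_const_mul' _ _ ENNReal.ofReal_ne_top, ← hdetL]
  exact lintegral_image_eq_lintegral_abs_det_fderiv_mul volume hs
    (fun c _ ↦ L.hasFDerivAt.hasFDerivWithinAt) hinj.injOn g

end Matrix

namespace ProbabilityTheory

variable {ι : Type*} [Fintype ι] {r : ι → ℝ}

lemma measurable_exponentialPDF (r : ℝ) : Measurable (exponentialPDF r) :=
  (measurable_exponentialPDFReal r).ennreal_ofReal

theorem pi_expMeasure_eq_withDensity (hr : ∀ i, 0 < r i) :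
    Measure.pi (fun i ↦ expMeasure (r i)) =
      volume.withDensity fun x ↦ ∏ i, exponentialPDF (r i) (x i) := by
  have : ∀ i, IsProbabilityMeasure (volume.withDensity (exponentialPDF (r i))) :=
    fun i ↦ isProbabilityMeasure_expMeasure (hr i)
  rw [volume_pi]
  exact Measure.pi_withDensity (f := fun i ↦ exponentialPDF (r i))
    fun i ↦ measurable_exponentialPDF (r i)

theorem prod_exponentialPDF_of_nonneg (hr : ∀ i, 0 ≤ r i) {x : ι → ℝ} (hx : 0 ≤ x) :
    ∏ i, exponentialPDF (r i) (x i) = ENNReal.ofReal ((∏ i, r i) * Real.exp (-(r ⬝ᵥ x))) := by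
  simp_rw [exponentialPDF_of_nonneg (hx _)]
  rw [← ENNReal.ofReal_prod_of_nonneg fun i _ ↦ mul_nonneg (hr i) (Real.exp_nonneg _),
    Finset.prod_mul_distrib, ← Real.exp_sum]
  simp [dotProduct]

theorem setLIntegral_Ici_prod_exponentialPDF (hr : ∀ i, 0 < r i) :
    ∫⁻ x in Set.Ici (0 : ι → ℝ), ∏ i, exponentialPDF (r i) (x i) = 1 := by
  have hsupp : (Function.support fun x : ι → ℝ ↦ ∏ i, exponentialPDF (r i) (x i)) ⊆
      Set.Ici 0 := by
    intro x hx i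
    by_contra hneg
    exact hx (Finset.prod_eq_zero (Finset.mem_univ i) (exponentialPDF_of_neg (not_le.mp hneg)))
  rw [setLIntegral_eq_of_support_subset hsupp, volume_pi,
    lintegral_fintype_prod_eq_prod (f := fun i ↦ exponentialPDF (r i))
      fun i ↦ measurable_exponentialPDF (r i)]
  simp [lintegral_exponentialPDF_eq_one (hr _)]

theorem pi_expMeasure_mulVec_image_Ici [DecidableEq ι] (hr : ∀ i, 0 < r i)
    {M : Matrix ι ι ℝ} (hM : ∀ i j, 0 ≤ M i j) (hdet : M.det ≠ 0) :
    Measure.pi (fun i ↦ expMeasure (r i)) (M.mulVec '' Set.Ici 0) =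
      ENNReal.ofReal (|M.det| * ∏ i, r i / (r ᵥ* M) i) := by
  set a := r ᵥ* M
  have ha : ∀ j, 0 < a j := Matrix.vecMul_pos_of_nonneg_of_det_ne_zero hM hdet hr
  have hdensity : ∀ c ∈ Set.Ici (0 : ι → ℝ), ∏ i, exponentialPDF (r i) ((M *ᵥ c) i) =
      ENNReal.ofReal (∏ i, r i / a i) * ∏ j, exponentialPDF (a j) (c j) := by
    intro c hc
    have hMc : 0 ≤ M *ᵥ c := fun k ↦ Finset.sum_nonneg fun i _ ↦ mul_nonneg (hM k i) (hc i)
    rw [prod_exponentialPDF_of_nonneg (fun i ↦ (hr i).le) hMc,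
      prod_exponentialPDF_of_nonneg (fun j ↦ (ha j).le) hc,
      ← ENNReal.ofReal_mul (Finset.prod_nonneg fun i _ ↦ (div_pos (hr i) (ha i)).le),
      Matrix.dotProduct_mulVec, Finset.prod_div_distrib, ← mul_assoc,
      div_mul_cancel₀ _ (Finset.prod_ne_zero_iff.mpr fun j _ ↦ (ha j).ne')]
  rw [pi_expMeasure_eq_withDensity hr, withDensity_apply', lintegral_image_mulVec hdet
    measurableSet_Ici, setLIntegral_congr_fun measurableSet_Ici hdensity,
    lintegral_const_mul' _ _ ENNReal.ofReal_ne_top, setLIntegral_Ici_prod_exponentialPDF ha,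
    mul_one, ← ENNReal.ofReal_mul (abs_nonneg _)]

end ProbabilityTheory

/-- The probability that a vector of independent exponential random variables with rates
`λᵢ` lies in the simplicial cone spanned by linearly independent nonnegative vectors
`v₁, …, vₙ` is `|det V| ∏ᵢ λᵢ / ⟨vᵢ, λ⟩`, where `V` has columns `vᵢ`. -/
theorem exponential_prob_simplicial_cone (n : ℕ) (lam : Fin n → ℝ) (hlam : ∀ i, 0 < lam i)
    (v : Fin n → Fin n → ℝ) (hv : ∀ i j, 0 ≤ v i j) (hli : LinearIndependent ℝ v) :
    (Measure.pi fun i => expMeasure (lam i))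
        {x : Fin n → ℝ | ∃ c : Fin n → ℝ, (∀ i, 0 ≤ c i) ∧ x = ∑ i, c i • v i} =
      ENNReal.ofReal
        (|(Matrix.of fun i j => v j i).det| * ∏ i, lam i / ∑ j, v i j * lam j) := by
  set M : Matrix (Fin n) (Fin n) ℝ := Matrix.of fun i j => v j i
  have hMT : M = (Matrix.of v)ᵀ := rfl
  have hMc : ∀ c, M *ᵥ c = ∑ i, c i • v i := fun c ↦ by
    rw [hMT, Matrix.mulVec_transpose, Matrix.vecMul_eq_sum]
    rfl
  have hcone : {x : Fin n → ℝ | ∃ c : Fin n → ℝ, (∀ i, 0 ≤ c i) ∧ x = ∑ i, c i • v i} =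
      M.mulVec '' Set.Ici 0 := by
    ext x
    simp only [Set.mem_ofPred_eq, Set.mem_image, Set.mem_Ici, Pi.le_def, Pi.zero_apply, hMc,
      eq_comm]
  have hdet : M.det ≠ 0 := by
    rw [hMT, Matrix.det_transpose]
    exact ((Matrix.of v).isUnit_iff_isUnit_det.mp
      (Matrix.linearIndependent_rows_iff_isUnit.mp hli)).ne_zero
  rw [hcone, pi_expMeasure_mulVec_image_Ici hlam (M := M) (fun i j ↦ hv j i) hdet]
  simp [M, Matrix.vecMul, dotProduct, mul_comm]
end
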